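/- Let K be a field, n a positive integer, and G ⊆ GL_n(K) a finite subgroup. Then the invariant field K(V ⊕ V*)^G, i.e. the fixed field of G acting on the fraction field K(x_1,…,x_n,y_1,…,y_n), is generated as a field extension of K by the union of the invariant rings K[x_1,…,x_n]^G and K[y_1,…,y_n]^G together with the single element u_0 := Σ_{j=1}^n x_j y_j. -/

import Mathlib

open MvPolynomial Matrix

variable (K : Type) [Field K] (n : ℕ)

noncomputable def gact (σ : GL (Fin n) K) :
    MvPolynomial (Fin n ⊕ Fin n) K →ₐ[K] MvPolynomial (Fin n ⊕ Fin n) K :=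
  aeval (Sum.elim
    (fun j => ∑ i : Fin n, C ((σ : Matrix (Fin n) (Fin n) K) i j) * X (Sum.inl i))
    (fun j => ∑ i : Fin n,
      C (((σ⁻¹ : GL (Fin n) K) : Matrix (Fin n) (Fin n) K) j i) * X (Sum.inr i)))

lemma gact_comp (σ τ : GL (Fin n) K) :
    (gact K n σ).comp (gact K n τ) = gact K n (σ * τ) := by
  apply algHom_ext
  rintro (j | j)
  · simp only [gact, AlgHom.comp_apply, aeval_X, Sum.elim_inl, map_sum, _root_.map_mul,
      aeval_C, algebraMap_eq]
    rw [Units.val_mul]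
    simp only [Matrix.mul_apply, map_sum, _root_.map_mul, Finset.sum_mul, Finset.mul_sum]
    rw [Finset.sum_comm]
    refine Finset.sum_congr rfl fun i _ => Finset.sum_congr rfl fun i' _ => ?_
    ring
  · simp only [gact, AlgHom.comp_apply, aeval_X, Sum.elim_inr, map_sum, _root_.map_mul,
      aeval_C, algebraMap_eq]
    rw [_root_.mul_inv_rev, Units.val_mul]
    simp only [Matrix.mul_apply, map_sum, _root_.map_mul, Finset.sum_mul, Finset.mul_sum]
    rw [Finset.sum_comm]
    refine Finset.sum_congr rfl fun i _ => Finset.sum_congr rfl fun i' _ => ?_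
    ring

lemma gact_one : gact K n 1 = AlgHom.id K _ := by
  apply algHom_ext
  rintro (j | j) <;>
    simp [gact, Matrix.one_apply, apply_ite (C : K → MvPolynomial (Fin n ⊕ Fin n) K),
      Finset.sum_ite_eq]

noncomputable def gactEquiv (σ : GL (Fin n) K) :
    MvPolynomial (Fin n ⊕ Fin n) K ≃ₐ[K] MvPolynomial (Fin n ⊕ Fin n) K :=
  AlgEquiv.ofAlgHom (gact K n σ) (gact K n σ⁻¹)
    (by rw [gact_comp, mul_inv_cancel, gact_one])
    (by rw [gact_comp, inv_mul_cancel, gact_one])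

noncomputable def gactFrac (σ : GL (Fin n) K) :
    FractionRing (MvPolynomial (Fin n ⊕ Fin n) K) ≃ₐ[K]
      FractionRing (MvPolynomial (Fin n ⊕ Fin n) K) :=
  IsFractionRing.algEquivOfAlgEquiv (gactEquiv K n σ)

/-!
Let `H = G × G` act on `K(x, y)`, the first factor on the `x`'s and the second contragrediently
on the `y`'s, so that `G` is the diagonal. An `H`-invariant rational function is a quotient of
`H`-invariant polynomials, and an `H`-invariant polynomial lies in `K[x]^G ⊗ K[y]^G`; hence the
field `F` generated by the two invariant rings and `u₀ = ∑ xⱼ yⱼ` contains `K(x, y)^H`. By the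
Galois correspondence for `K(x, y) / K(x, y)^H`, `F` is the fixed field of the elements of `H`
fixing it. Since `(σ, τ)` sends `u₀` to the bilinear form of `σ τ⁻¹`, these elements form the
diagonal, so `F = K(x, y)^G`.
-/

open TensorProduct

namespace TensorProduct

variable {K M N : Type*} [Field K] [AddCommGroup M] [Module K M] [AddCommGroup N] [Module K N]

theorem mem_range_rTensor_iInf_fixedSubmodule (F : Set (M →ₗ[K] M)) (x : M ⊗[K] N)
    (hx : ∀ f ∈ F, f.rTensor N x = x) :
    x ∈ LinearMap.range ((⨅ f ∈ F, f.fixedSubmodule).subtype.rTensor N) := by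
  let 𝒞 := Module.Free.chooseBasis K N
  obtain ⟨b, rfl⟩ := eq_repr_basis_right 𝒞 x
  have hb : ∀ i, b i ∈ ⨅ f ∈ F, f.fixedSubmodule := by
    simp only [Submodule.mem_iInf, LinearMap.mem_fixedSubmodule_iff]
    intro i f hf
    have hfb : b.mapRange f f.map_zero = b := by
      apply sum_tmul_basis_right_injective 𝒞
      rw [Finsupp.lsum_apply, Finsupp.lsum_apply, Finsupp.sum_mapRange_index (by simp)]
      simpa [Finsupp.sum, map_sum] using hx f hf
    exact DFunLike.congr_fun hfb i
  refine ⟨∑ i ∈ b.support, (⟨b i, hb i⟩ : ↥(⨅ f ∈ F, f.fixedSubmodule)) ⊗ₜ 𝒞 i, ?_⟩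
  simp [Finsupp.sum, map_sum]

theorem mem_range_lTensor_iInf_fixedSubmodule (E : Set (N →ₗ[K] N)) (x : M ⊗[K] N)
    (hx : ∀ g ∈ E, g.lTensor M x = x) :
    x ∈ LinearMap.range ((⨅ g ∈ E, g.fixedSubmodule).subtype.lTensor M) := by
  obtain ⟨y, hy⟩ := mem_range_rTensor_iInf_fixedSubmodule E (TensorProduct.comm K M N x)
    fun g hg => by rw [LinearMap.rTensor_comm, hx g hg]
  refine ⟨TensorProduct.comm K _ M y, ?_⟩
  rw [LinearMap.lTensor_comm, hy]
  simp

theorem mem_range_map_iInf_fixedSubmodule (F : Set (M →ₗ[K] M)) (E : Set (N →ₗ[K] N))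
    (x : M ⊗[K] N) (hF : ∀ f ∈ F, f.rTensor N x = x) (hE : ∀ g ∈ E, g.lTensor M x = x) :
    x ∈ LinearMap.range
      (map (⨅ f ∈ F, f.fixedSubmodule).subtype (⨅ g ∈ E, g.fixedSubmodule).subtype) := by
  obtain ⟨y, rfl⟩ := mem_range_lTensor_iInf_fixedSubmodule E x hE
  have hy : ∀ f ∈ F, f.rTensor _ y = y := fun f hf =>
    Module.Flat.lTensor_preserves_injective_linearMap _ Subtype.val_injective <| by
      simpa only [← LinearMap.comp_apply, LinearMap.rTensor_comp_lTensor,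
        LinearMap.lTensor_comp_rTensor] using hF f hf
  obtain ⟨z, rfl⟩ := mem_range_rTensor_iInf_fixedSubmodule F y hy
  exact ⟨z, by rw [← LinearMap.comp_apply, LinearMap.lTensor_comp_rTensor]⟩

end TensorProduct

section FixedFractions

variable {Γ B L : Type*} [Group Γ] [CommRing B] [IsDomain B] [Field L] [Algebra B L]
  [IsFractionRing B L] [MulSemiringAction Γ B] [MulSemiringAction Γ L] [SMulDistribClass Γ B L]

theorem IsFractionRing.exists_eq_div_of_forall_smul_eq (H : Subgroup Γ) [Finite H] {z : L}
    (hz : ∀ h ∈ H, h • z = z) :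
    ∃ p q : B, (∀ h ∈ H, h • p = p) ∧ (∀ h ∈ H, h • q = q) ∧
      z = algebraMap B L p / algebraMap B L q := by
  classical
  have := Fintype.ofFinite H
  obtain ⟨r, s, hs, rfl⟩ := IsFractionRing.div_surjective (A := B) z
  -- Multiply `r` and `s` by the other conjugates of `s`: the new denominator `∏ h, h • s` is
  -- invariant, hence so is the new numerator `z * ∏ h, h • s`.
  set s' := ∏ h ∈ Finset.univ.erase (1 : H), (h : Γ) • s
  have hsplit : ∏ h : H, (h : Γ) • s = s * s' := by
    rw [← Finset.mul_prod_erase _ _ (Finset.mem_univ 1), OneMemClass.coe_one, one_smul]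
  have hinv : ∀ g ∈ H, g • (s * s') = s * s' := fun g hg => by
    rw [← hsplit, Finset.smul_prod']
    exact Fintype.prod_equiv (Equiv.mulLeft ⟨g, hg⟩) _ _ fun h => (mul_smul _ _ _).symm
  have hs0 : algebraMap B L s ≠ 0 := IsFractionRing.to_map_ne_zero_of_mem_nonZeroDivisors hs
  have hs' : algebraMap B L s' ≠ 0 := by
    refine (map_ne_zero_iff _ (IsFractionRing.injective B L)).mpr (Finset.prod_ne_zero_iff.mpr ?_)
    exact fun h _ => (smul_eq_zero_iff_eq (h : Γ)).not.mpr (nonZeroDivisors.ne_zero hs)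
  have hrs' : algebraMap B L (r * s') =
      algebraMap B L r / algebraMap B L s * algebraMap B L (s * s') := by
    rw [map_mul, map_mul]
    field_simp
  refine ⟨r * s', s * s', fun g hg => IsFractionRing.injective B L ?_, hinv, ?_⟩
  · rw [algebraMap.smul', hrs', smul_mul', hz g hg, ← algebraMap.smul', hinv g hg]
  · rw [map_mul, map_mul, mul_div_mul_right _ _ hs']

end FixedFractions

instance Subgroup.finite_prod {G₁ G₂ : Type*} [Group G₁] [Group G₂] (H₁ : Subgroup G₁)
    (H₂ : Subgroup G₂) [Finite H₁] [Finite H₂] : Finite (H₁.prod H₂) :=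
  Finite.of_equiv _ (Subgroup.prodEquiv H₁ H₂).symm.toEquiv

section GaloisCorrespondence

variable {Γ L : Type*} [Group Γ] [Field L] [MulSemiringAction Γ L]

theorem Subfield.mem_iff_forall_smul_eq (H : Subgroup Γ) [Finite H] (F : Subfield L)
    (hF : ∀ x : L, (∀ h ∈ H, h • x = x) → x ∈ F) (x : L) :
    x ∈ F ↔ ∀ h ∈ H, (∀ y ∈ F, h • y = y) → h • x = x := by
  refine ⟨fun hx h _ hfix => hfix x hx, fun hx => ?_⟩
  let F' : IntermediateField (FixedPoints.subfield H L) L :=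
    F.toIntermediateField fun e => hF e fun h hh => e.2 ⟨h, hh⟩
  -- `L / L^H` is Galois, and every automorphism of `L` over `L^H` comes from `H`.
  change x ∈ F'
  rw [← IsGalois.fixedField_fixingSubgroup F']
  rintro ⟨φ, hφ⟩
  obtain ⟨h, rfl⟩ := FixedPoints.toAlgAut_surjective H L φ
  exact hx h h.2 fun y hy => hφ ⟨y, hy⟩

end GaloisCorrespondence

namespace MvPolynomial

section LinSubst

variable {R ι : Type*} [CommSemiring R] [Fintype ι]

noncomputable def linSubst (A : Matrix ι ι R) : MvPolynomial ι R →ₐ[R] MvPolynomial ι R :=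
  aeval fun j => ∑ i, C (A i j) * X i

theorem linSubst_X (A : Matrix ι ι R) (j : ι) : linSubst A (X j) = ∑ i, C (A i j) * X i :=
  aeval_X _ _

theorem linSubst_mul (A B : Matrix ι ι R) :
    linSubst (A * B) = (linSubst A).comp (linSubst B) := by
  refine algHom_ext fun j => ?_
  simp only [AlgHom.comp_apply, linSubst_X, map_sum, _root_.map_mul, algHom_C, algebraMap_eq,
    Matrix.mul_apply, Finset.mul_sum, Finset.sum_mul]
  rw [Finset.sum_comm]
  refine Finset.sum_congr rfl fun i _ => Finset.sum_congr rfl fun l _ => ?_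
  ring

theorem linSubst_one [DecidableEq ι] : linSubst (1 : Matrix ι ι R) = AlgHom.id R _ := by
  refine algHom_ext fun j => ?_
  simp [linSubst_X, Matrix.one_apply]

end LinSubst

section SumMap

variable {R ι κ : Type*} [CommSemiring R]

theorem tensorEquivSum_tmul (p : MvPolynomial ι R) (q : MvPolynomial κ R) :
    tensorEquivSum R ι κ R (p ⊗ₜ q) = rename Sum.inl p * rename Sum.inr q := by
  have hl : (tensorEquivSum R ι κ R).toAlgHom.comp Algebra.TensorProduct.includeLeft =
      rename Sum.inl := algHom_ext fun i => by simp
  have hr : (tensorEquivSum R ι κ R).toAlgHom.comp Algebra.TensorProduct.includeRight =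
      rename Sum.inr := algHom_ext fun i => by simp
  rw [← DFunLike.congr_fun hl p, ← DFunLike.congr_fun hr q]
  simp [← map_mul]

noncomputable def sumMap (f : MvPolynomial ι R →ₐ[R] MvPolynomial ι R)
    (g : MvPolynomial κ R →ₐ[R] MvPolynomial κ R) :
    MvPolynomial (ι ⊕ κ) R →ₐ[R] MvPolynomial (ι ⊕ κ) R :=
  ((tensorEquivSum R ι κ R).toAlgHom.comp (Algebra.TensorProduct.map f g)).comp
    (tensorEquivSum R ι κ R).symm.toAlgHom

variable (f f' : MvPolynomial ι R →ₐ[R] MvPolynomial ι R)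
  (g g' : MvPolynomial κ R →ₐ[R] MvPolynomial κ R)

theorem sumMap_tensorEquivSum (t : MvPolynomial ι R ⊗[R] MvPolynomial κ R) :
    sumMap f g (tensorEquivSum R ι κ R t) =
      tensorEquivSum R ι κ R (Algebra.TensorProduct.map f g t) := by
  simp [sumMap]

theorem sumMap_rename_mul_rename (p : MvPolynomial ι R) (q : MvPolynomial κ R) :
    sumMap f g (rename Sum.inl p * rename Sum.inr q) =
      rename Sum.inl (f p) * rename Sum.inr (g q) := by
  rw [← tensorEquivSum_tmul, sumMap_tensorEquivSum, Algebra.TensorProduct.map_tmul,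
    tensorEquivSum_tmul]

theorem sumMap_rename_inl (p : MvPolynomial ι R) :
    sumMap f g (rename Sum.inl p) = rename Sum.inl (f p) := by
  simpa using sumMap_rename_mul_rename f g p 1

theorem sumMap_rename_inr (q : MvPolynomial κ R) :
    sumMap f g (rename Sum.inr q) = rename Sum.inr (g q) := by
  simpa using sumMap_rename_mul_rename f g 1 q

theorem sumMap_comp : (sumMap f g).comp (sumMap f' g') = sumMap (f.comp f') (g.comp g') := by
  refine algHom_ext ?_
  rintro (i | i)
  · rw [← rename_X Sum.inl i]
    simp only [AlgHom.comp_apply, sumMap_rename_inl]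
  · rw [← rename_X Sum.inr i]
    simp only [AlgHom.comp_apply, sumMap_rename_inr]

theorem sumMap_id : sumMap (AlgHom.id R (MvPolynomial ι R)) (AlgHom.id R (MvPolynomial κ R)) =
    AlgHom.id R _ := by
  ext p
  simp [sumMap]

end SumMap

section Invariants

variable {K ι κ : Type*} [Field K]

theorem mem_adjoin_of_forall_sumMap_eq (F : Set (MvPolynomial ι K →ₐ[K] MvPolynomial ι K))
    (E : Set (MvPolynomial κ K →ₐ[K] MvPolynomial κ K)) (P : MvPolynomial (ι ⊕ κ) K)
    (hF : ∀ f ∈ F, sumMap f (AlgHom.id K _) P = P)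
    (hE : ∀ g ∈ E, sumMap (AlgHom.id K _) g P = P) :
    P ∈ Algebra.adjoin K (rename Sum.inl '' {p | ∀ f ∈ F, f p = p} ∪
      rename Sum.inr '' {q | ∀ g ∈ E, g q = q}) := by
  obtain ⟨t, rfl⟩ := (tensorEquivSum K ι κ K).surjective P
  have hFt : ∀ f ∈ AlgHom.toLinearMap '' F, f.rTensor _ t = t := by
    rintro _ ⟨f, hf, rfl⟩
    apply (tensorEquivSum K ι κ K).injective
    rw [← hF f hf, sumMap_tensorEquivSum]
    congr 1
  have hEt : ∀ g ∈ AlgHom.toLinearMap '' E, g.lTensor _ t = t := by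
    rintro _ ⟨g, hg, rfl⟩
    apply (tensorEquivSum K ι κ K).injective
    rw [← hE g hg, sumMap_tensorEquivSum]
    congr 1
  obtain ⟨u, rfl⟩ := TensorProduct.mem_range_map_iInf_fixedSubmodule _ _ t hFt hEt
  clear hF hE hFt hEt
  induction u using TensorProduct.induction_on with
  | zero => simp
  | tmul v w =>
    have hv := v.2
    have hw := w.2
    simp only [Submodule.mem_iInf, LinearMap.mem_fixedSubmodule_iff] at hv hw
    rw [TensorProduct.map_tmul, tensorEquivSum_tmul]
    exact Subalgebra.mul_mem _
      (Algebra.subset_adjoin (Or.inl ⟨v, fun f hf => hv _ ⟨f, hf, rfl⟩, rfl⟩))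
      (Algebra.subset_adjoin (Or.inr ⟨w, fun g hg => hw _ ⟨g, hg, rfl⟩, rfl⟩))
  | add u u' hu hu' => rw [map_add, map_add]; exact Subalgebra.add_mem _ hu hu'

end Invariants

section PairAction

variable {K ι : Type*} [CommRing K] [Fintype ι] [DecidableEq ι]

/-- `(σ, τ)` acts on the `x`-variables by `σ` and on the `y`-variables contragrediently, by
`(τ⁻¹)ᵀ`. -/
noncomputable def pairActHom :
    GL ι K × GL ι K →* (MvPolynomial (ι ⊕ ι) K →ₐ[K] MvPolynomial (ι ⊕ ι) K) where
  toFun g := sumMap (linSubst g.1) (linSubst ((g.2⁻¹ : GL ι K) : Matrix ι ι K)ᵀ)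
  map_one' := by
    rw [Prod.fst_one, Prod.snd_one, inv_one, Units.val_one, Matrix.transpose_one, linSubst_one,
      sumMap_id]
    rfl
  map_mul' g h := by
    rw [AlgHom.End_toSemigroup_toMul_mul, sumMap_comp, ← linSubst_mul, ← linSubst_mul,
      Prod.fst_mul, Prod.snd_mul, _root_.mul_inv_rev, Units.val_mul, Units.val_mul,
      Matrix.transpose_mul]

noncomputable def pairAct :
    GL ι K × GL ι K →* (MvPolynomial (ι ⊕ ι) K ≃ₐ[K] MvPolynomial (ι ⊕ ι) K) :=
  (AlgEquiv.algHomUnitsEquiv K _).toMonoidHom.comp (MonoidHom.toHomUnits pairActHom)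

theorem pairAct_apply (g : GL ι K × GL ι K) (p : MvPolynomial (ι ⊕ ι) K) :
    pairAct g p = sumMap (linSubst g.1) (linSubst ((g.2⁻¹ : GL ι K) : Matrix ι ι K)ᵀ) p :=
  rfl

theorem pairAct_X_inl (g : GL ι K × GL ι K) (i : ι) :
    pairAct g (X (Sum.inl i)) = ∑ a, C ((g.1 : Matrix ι ι K) a i) * X (Sum.inl a) := by
  rw [pairAct_apply, ← rename_X Sum.inl i, sumMap_rename_inl, linSubst_X]
  simp

theorem pairAct_X_inr (g : GL ι K × GL ι K) (j : ι) :
    pairAct g (X (Sum.inr j)) =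
      ∑ b, C (((g.2⁻¹ : GL ι K) : Matrix ι ι K) j b) * X (Sum.inr b) := by
  rw [pairAct_apply, ← rename_X Sum.inr j, sumMap_rename_inr, linSubst_X]
  simp

end PairAction

section Pairing

variable {K ι : Type*} [CommRing K] [Fintype ι] [DecidableEq ι]

noncomputable def bilinPoly (M : Matrix ι ι K) : MvPolynomial (ι ⊕ ι) K :=
  ∑ i, ∑ j, C (M i j) * (X (Sum.inl i) * X (Sum.inr j))

theorem eval_bilinPoly (M : Matrix ι ι K) (i j : ι) :
    eval (Sum.elim (Pi.single i 1) (Pi.single j 1)) (bilinPoly M) = M i j := by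
  simp [bilinPoly, Pi.single_apply]

theorem bilinPoly_injective : Function.Injective (bilinPoly : Matrix ι ι K → _) :=
  fun M N h => Matrix.ext fun i j => by rw [← eval_bilinPoly M, h, eval_bilinPoly]

theorem bilinPoly_one : bilinPoly (1 : Matrix ι ι K) = ∑ j, X (Sum.inl j) * X (Sum.inr j) := by
  simp [bilinPoly, Matrix.one_apply]

theorem pairAct_bilinPoly (g : GL ι K × GL ι K) (M : Matrix ι ι K) :
    pairAct g (bilinPoly M) =
      bilinPoly ((g.1 : Matrix ι ι K) * M * ((g.2⁻¹ : GL ι K) : Matrix ι ι K)) := by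
  have hterm : ∀ i j, pairAct g (C (M i j) * (X (Sum.inl i) * X (Sum.inr j))) =
      ∑ a, ∑ b, C ((g.1 : Matrix ι ι K) a i * M i j * ((g.2⁻¹ : GL ι K) : Matrix ι ι K) j b) *
        (X (Sum.inl a) * X (Sum.inr b)) := by
    intro i j
    rw [_root_.map_mul, _root_.map_mul, pairAct_X_inl, pairAct_X_inr, Finset.sum_mul_sum,
      Finset.mul_sum]
    refine Finset.sum_congr rfl fun a _ => ?_
    rw [Finset.mul_sum]
    refine Finset.sum_congr rfl fun b _ => ?_
    rw [show pairAct g (C (M i j)) = C (M i j) from (pairAct g).commutes _, C_mul, C_mul]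
    ring
  have hswap : ∀ f : ι → ι → ι → ι → MvPolynomial (ι ⊕ ι) K,
      ∑ i, ∑ j, ∑ a, ∑ b, f i j a b = ∑ a, ∑ b, ∑ j, ∑ i, f i j a b := fun f =>
    calc _ = ∑ j, ∑ i, ∑ a, ∑ b, f i j a b := Finset.sum_comm
      _ = ∑ j, ∑ a, ∑ b, ∑ i, f i j a b := Finset.sum_congr rfl fun j _ => by
          rw [Finset.sum_comm]; exact Finset.sum_congr rfl fun a _ => Finset.sum_comm
      _ = _ := by rw [Finset.sum_comm]; exact Finset.sum_congr rfl fun a _ => Finset.sum_comm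
  simp only [bilinPoly, map_sum, hterm, Matrix.mul_apply, Finset.sum_mul]
  exact hswap _

theorem pairAct_bilinPoly_one_eq_iff (g : GL ι K × GL ι K) :
    pairAct g (bilinPoly 1) = bilinPoly 1 ↔ g.1 = g.2 := by
  rw [pairAct_bilinPoly, Matrix.mul_one, bilinPoly_injective.eq_iff, ← Units.val_mul,
    Units.val_eq_one, mul_inv_eq_one]

end Pairing

section Action

variable {K ι : Type*} [Field K] [Fintype ι] [DecidableEq ι]

noncomputable instance : MulSemiringAction (GL ι K × GL ι K) (MvPolynomial (ι ⊕ ι) K) :=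
  MulSemiringAction.compHom _ pairAct

noncomputable instance :
    MulSemiringAction (GL ι K × GL ι K) (FractionRing (MvPolynomial (ι ⊕ ι) K)) :=
  IsFractionRing.mulSemiringAction _ (MvPolynomial (ι ⊕ ι) K) _

theorem smul_eq_pairAct (g : GL ι K × GL ι K) (p : MvPolynomial (ι ⊕ ι) K) :
    g • p = pairAct g p :=
  rfl

end Action

end MvPolynomial

theorem gact_eq_pairAct (σ : GL (Fin n) K) : gact K n σ = (pairAct (σ, σ)).toAlgHom := by
  refine algHom_ext ?_
  rintro (j | j)
  · simp [gact, pairAct_X_inl]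
  · simp [gact, pairAct_X_inr]

theorem gactFrac_eq_smul (σ : GL (Fin n) K) (z : FractionRing (MvPolynomial (Fin n ⊕ Fin n) K)) :
    gactFrac K n σ z = (σ, σ) • z := by
  obtain ⟨p, q, -, rfl⟩ := IsFractionRing.div_surjective (A := MvPolynomial (Fin n ⊕ Fin n) K) z
  simp [gactFrac, smul_div₀', ← algebraMap.coe_smul', smul_eq_pairAct, gactEquiv, gact_eq_pairAct]

section InvariantField

variable (G : Subgroup (GL (Fin n) K))

def separatedInvariants : Set (MvPolynomial (Fin n ⊕ Fin n) K) :=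
  {p | (∃ p₀ : MvPolynomial (Fin n) K, p = rename Sum.inl p₀) ∧ ∀ σ ∈ G, gact K n σ p = p} ∪
    {p | (∃ p₀ : MvPolynomial (Fin n) K, p = rename Sum.inr p₀) ∧ ∀ σ ∈ G, gact K n σ p = p}

noncomputable def adjoinInvariants :
    IntermediateField K (FractionRing (MvPolynomial (Fin n ⊕ Fin n) K)) :=
  IntermediateField.adjoin K (algebraMap _ _ ''
    (separatedInvariants K n G ∪ {∑ j : Fin n, X (Sum.inl j) * X (Sum.inr j)}))

theorem mem_adjoin_separatedInvariants {P : MvPolynomial (Fin n ⊕ Fin n) K}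
    (hP : ∀ g ∈ G.prod G, g • P = P) : P ∈ Algebra.adjoin K (separatedInvariants K n G) := by
  refine Algebra.adjoin_mono ?_ (mem_adjoin_of_forall_sumMap_eq
    ((fun σ : GL (Fin n) K => linSubst (σ : Matrix (Fin n) (Fin n) K)) '' G)
    ((fun τ : GL (Fin n) K => linSubst ((τ⁻¹ : GL (Fin n) K) : Matrix (Fin n) (Fin n) K)ᵀ) '' G)
    P ?_ ?_)
  · rintro _ (⟨p, hp, rfl⟩ | ⟨q, hq, rfl⟩)
    · refine Or.inl ⟨⟨p, rfl⟩, fun σ hσ => ?_⟩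
      rw [gact_eq_pairAct, AlgEquiv.coe_toAlgHom, pairAct_apply, sumMap_rename_inl,
        hp _ ⟨σ, hσ, rfl⟩]
    · refine Or.inr ⟨⟨q, rfl⟩, fun σ hσ => ?_⟩
      rw [gact_eq_pairAct, AlgEquiv.coe_toAlgHom, pairAct_apply, sumMap_rename_inr,
        hq _ ⟨σ, hσ, rfl⟩]
  · rintro _ ⟨σ, hσ, rfl⟩
    simpa [smul_eq_pairAct, pairAct_apply, linSubst_one] using hP (σ, 1) ⟨hσ, one_mem G⟩
  · rintro _ ⟨τ, hτ, rfl⟩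
    simpa [smul_eq_pairAct, pairAct_apply, linSubst_one] using hP (1, τ) ⟨one_mem G, hτ⟩

theorem algebraMap_mem_adjoinInvariants {P : MvPolynomial (Fin n ⊕ Fin n) K}
    (hP : ∀ g ∈ G.prod G, g • P = P) :
    algebraMap _ (FractionRing (MvPolynomial (Fin n ⊕ Fin n) K)) P ∈ adjoinInvariants K n G := by
  refine IntermediateField.algebra_adjoin_le_adjoin K _
    (Algebra.adjoin_mono (Set.image_mono Set.subset_union_left) ?_)
  rw [← IsScalarTower.coe_toAlgHom' K, Algebra.adjoin_image]
  exact ⟨P, mem_adjoin_separatedInvariants K n G hP, rfl⟩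

theorem mem_adjoinInvariants_of_forall_smul_eq [Finite G]
    {z : FractionRing (MvPolynomial (Fin n ⊕ Fin n) K)} (hz : ∀ g ∈ G.prod G, g • z = z) :
    z ∈ adjoinInvariants K n G := by
  obtain ⟨p, q, hp, hq, rfl⟩ := IsFractionRing.exists_eq_div_of_forall_smul_eq
    (B := MvPolynomial (Fin n ⊕ Fin n) K) (G.prod G) hz
  exact div_mem (algebraMap_mem_adjoinInvariants K n G hp)
    (algebraMap_mem_adjoinInvariants K n G hq)

theorem gact_eq_self_of_mem {σ : GL (Fin n) K} (hσ : σ ∈ G) {p : MvPolynomial (Fin n ⊕ Fin n) K}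
    (hp : p ∈ separatedInvariants K n G ∪ {∑ j : Fin n, X (Sum.inl j) * X (Sum.inr j)}) :
    gact K n σ p = p := by
  rcases hp with (hp | hp) | rfl
  · exact hp.2 σ hσ
  · exact hp.2 σ hσ
  · rw [← bilinPoly_one, gact_eq_pairAct, AlgEquiv.coe_toAlgHom,
      (pairAct_bilinPoly_one_eq_iff _).mpr rfl]

theorem smul_eq_self_of_mem_adjoinInvariants {σ : GL (Fin n) K} (hσ : σ ∈ G)
    {y : FractionRing (MvPolynomial (Fin n ⊕ Fin n) K)} (hy : y ∈ adjoinInvariants K n G) :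
    (σ, σ) • y = y := by
  have hext := IntermediateField.adjoin_algHom_ext K
    (φ₁ := (gactFrac K n σ).toAlgHom.comp (adjoinInvariants K n G).val)
    (φ₂ := (adjoinInvariants K n G).val) fun _ ⟨p, hp, hpy⟩ => by
      subst hpy
      change gactFrac K n σ (algebraMap _ _ p) = algebraMap _ _ p
      rw [gactFrac, IsFractionRing.algEquivOfAlgEquiv_algebraMap]
      exact congrArg _ (gact_eq_self_of_mem K n G hσ hp)
  rw [← gactFrac_eq_smul]
  exact congr($hext ⟨y, hy⟩)

end InvariantField

theorem invariantField_eq_adjoin (G : Subgroup (GL (Fin n) K)) (hG : Finite G)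
    (z : FractionRing (MvPolynomial (Fin n ⊕ Fin n) K)) :
    (∀ σ ∈ G, gactFrac K n σ z = z) ↔
      z ∈ IntermediateField.adjoin K
        (algebraMap (MvPolynomial (Fin n ⊕ Fin n) K)
            (FractionRing (MvPolynomial (Fin n ⊕ Fin n) K)) ''
          ({p | (∃ p₀ : MvPolynomial (Fin n) K, p = rename Sum.inl p₀) ∧
              ∀ σ ∈ G, gact K n σ p = p} ∪
            {p | (∃ p₀ : MvPolynomial (Fin n) K, p = rename Sum.inr p₀) ∧
              ∀ σ ∈ G, gact K n σ p = p} ∪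
            {∑ j : Fin n, X (Sum.inl j) * X (Sum.inr j)})) := by
  have := hG
  change _ ↔ z ∈ (adjoinInvariants K n G).toSubfield
  rw [Subfield.mem_iff_forall_smul_eq (G.prod G) (adjoinInvariants K n G).toSubfield
    fun x hx => mem_adjoinInvariants_of_forall_smul_eq K n G hx]
  constructor
  · rintro hz ⟨σ, τ⟩ ⟨hσ, -⟩ hfix
    have hu := hfix _ (IntermediateField.subset_adjoin K _ ⟨_, Or.inr rfl, rfl⟩)
    rw [← algebraMap.coe_smul', smul_eq_pairAct, ← bilinPoly_one] at hu
    obtain rfl : σ = τ := (pairAct_bilinPoly_one_eq_iff _).mp (IsFractionRing.injective _ _ hu)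
    rw [← gactFrac_eq_smul]
    exact hz σ hσ
  · intro hz σ hσ
    rw [gactFrac_eq_smul]
    exact hz (σ, σ) ⟨hσ, hσ⟩ fun y hy => smul_eq_self_of_mem_adjoinInvariants K n G hσ hy
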